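/- arXiv:2108.04323 — 3 statements merged into one kernel-verified Lean document; each statement's English description precedes it below -/
import Mathlib

section
/- Let $\pi$ be a permutation of $\{1,\ldots,n\}$ and let $A \subseteq \{1,\ldots,n\}$ be a set such that $\pi(i) \neq i$ for every $i \in A$. Then there exists a subset $B \subseteq A$ with $|B| \geq |A|/3$ such that $\pi(i) \notin B$ for every $i \in B$. -/
/-! Greedy: put any `i ∈ A` into `B` and discard `i`, `π i` and `π⁻¹ i` from `A`. The only
elements of `A` whose membership in `B` could conflict with that of `i` are `π i` and `π⁻¹ i`,
so each chosen element costs at most three elements of `A`. -/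

namespace Equiv.Perm

variable {α : Type*} [DecidableEq α]

theorem exists_subset_card_le_three_mul_card_and_apply_notMem (π : Perm α) (A : Finset α)
    (hA : ∀ i ∈ A, π i ≠ i) :
    ∃ B ⊆ A, A.card ≤ 3 * B.card ∧ ∀ i ∈ B, π i ∉ B := by
  induction A using Finset.strongInduction with
  | _ A ih =>
  obtain rfl | ⟨i, hi⟩ := A.eq_empty_or_nonempty
  · exact ⟨∅, by simp⟩
  set A' := A \ {i, π i, π⁻¹ i}
  have hA'A : A' ⊆ A := Finset.sdiff_subset
  have hiA' : i ∉ A' := by simp [A']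
  obtain ⟨B', hB'A', hcard, hB'⟩ :=
    ih A' ((Finset.ssubset_iff_of_subset hA'A).2 ⟨i, hi, hiA'⟩)
      fun j hj => hA j (hA'A hj)
  have hπiB' : π i ∉ B' := fun h => by simpa [A'] using hB'A' h
  have hπinvB' : ∀ j ∈ B', π j ≠ i := fun j hj hji => by
    simpa [A', ← hji] using hB'A' hj
  refine ⟨insert i B', Finset.insert_subset hi (hB'A'.trans hA'A), ?_, ?_⟩
  · have hAA' : A.card ≤ A'.card + 3 :=
      Finset.card_le_card_sdiff_add_card.trans (Nat.add_le_add_left Finset.card_le_three _)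
    rw [Finset.card_insert_of_notMem fun h => hiA' (hB'A' h)]
    omega
  · rintro j hj
    rw [Finset.mem_insert, not_or]
    obtain rfl | hj := Finset.mem_insert.1 hj
    · exact ⟨hA j hi, hπiB'⟩
    · exact ⟨hπinvB' j hj, hB' j hj⟩

end Equiv.Perm

theorem stmt_0 (n : ℕ) (π : Equiv.Perm (Fin n)) (A : Finset (Fin n))
    (hA : ∀ i ∈ A, π i ≠ i) :
    ∃ B ⊆ A, A.card ≤ 3 * B.card ∧ ∀ i ∈ B, π i ∉ B :=
  π.exists_subset_card_le_three_mul_card_and_apply_notMem A hA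
end

section
/- Let $(X(i,j))_{1 \le i < j \le n}$ be i.i.d. Bernoulli(1/2) random variables representing the edges of a $G(n,1/2)$ random graph (with $X(j,i) := X(i,j)$). Let $\pi \in S_n$, $1 \le m \le n$, and let $k = |\{i \le m : \pi(i) = i\}|$. Then there exist positive universal constants $C_1, C_2$ (independent of $n$, $m$, $\pi$) such that $\mathbb{P}(X(i,j) = X(\pi(i), \pi(j)) \text{ for all } 1 \le i < j \le m) \le C_1 e^{-C_2 (m-k) m}$. -/
open MeasureTheory ProbabilityTheory
open scoped ENNReal

/-!
The permutation `π` acts on the edges of the complete graph on `M = {0, …, m - 1}`. A vertex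
of `M` moved by `π` spans a moved edge with all but at most two other vertices of `M`, so at
least `(m - k)(m - 2) / 2` edges of `M` are moved. Greedily, a third of them form a set `T`
disjoint from its image `π T`. The event forces `X e = X (π e)` for `e ∈ T`, a coincidence
among `2 |T|` distinct independent fair bits, which has probability at most
`2 ^ (-|T|) ≤ 4 exp (-(log 2 / 12) (m - k) m)`.
-/

open Finset

theorem Equiv.Perm.exists_subset_forall_apply_notMem_card_le {α : Type*} [DecidableEq α]
    (e : Equiv.Perm α) (S : Finset α) (hS : ∀ p ∈ S, e p ≠ p) :
    ∃ T ⊆ S, (∀ t ∈ T, e t ∉ T) ∧ #S ≤ 3 * #T := by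
  induction S using Finset.strongInduction with
  | H S ih =>
  rcases S.eq_empty_or_nonempty with rfl | ⟨p, hp⟩
  · exact ⟨∅, empty_subset _, by simp, by simp⟩
  set R : Finset α := {p, e p, e.symm p}
  have hpR : p ∈ R := by simp [R]
  have hssub : S \ R ⊂ S :=
    Finset.ssubset_iff_subset_ne.2 ⟨sdiff_subset, fun h => (mem_sdiff.1 (h ▸ hp)).2 hpR⟩
  obtain ⟨T, hTS, hT, hcard⟩ := ih _ hssub fun q hq => hS q (mem_sdiff.1 hq).1
  have hTR : ∀ q ∈ T, q ∉ R := fun q hq => (mem_sdiff.1 (hTS hq)).2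
  have hpT : p ∉ T := fun h => hTR p h hpR
  refine ⟨insert p T, insert_subset hp (hTS.trans sdiff_subset), ?_, ?_⟩
  · intro t ht
    rw [mem_insert] at ht ⊢
    rcases ht with rfl | ht
    · rintro (h | h)
      · exact hS t hp h
      · exact hTR _ h (by simp [R])
    · rintro (h | h)
      · exact hTR t ht (by simp [R, ← h])
      · exact hT t ht h
  · have : #S ≤ #(S \ R) + #R := card_le_card_sdiff_add_card
    have : #R ≤ 3 := card_le_three
    rw [card_insert_of_notMem hpT]
    omega

theorem measure_forall_eq_apply_perm_le {Ω ι : Type*} [MeasurableSpace Ω] {μ : Measure Ω}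
    [DecidableEq ι] {Y : ι → Ω → Bool} (hY : iIndepFun Y μ)
    (hhalf : ∀ i b, μ {ω | Y i ω = b} ≤ 2⁻¹) (e : Equiv.Perm ι) {T : Finset ι}
    (hT : ∀ t ∈ T, e t ∉ T) :
    μ {ω | ∀ t ∈ T, Y t ω = Y (e t) ω} ≤ 2⁻¹ ^ #T := by
  set U := T ∪ T.map e.toEmbedding
  have hU : #U = 2 * #T := by
    rw [card_union_of_disjoint, card_map, two_mul]
    rw [disjoint_right]
    rintro _ hq hqT
    obtain ⟨t, ht, rfl⟩ := mem_map.1 hq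
    exact hT t ht hqT
  -- `w v` agrees with `v` on `T` and with `v ∘ e⁻¹` on `e T`; every outcome in the event is one
  -- of these configurations on `U`
  let w (v : T → Bool) (q : ι) : Bool :=
    if h : q ∈ T then v ⟨q, h⟩ else if h' : e.symm q ∈ T then v ⟨_, h'⟩ else false
  have hsub : {ω | ∀ t ∈ T, Y t ω = Y (e t) ω} ⊆
      ⋃ v : T → Bool, ⋂ q ∈ U, Y q ⁻¹' {w v q} := by
    intro ω hω
    simp only [Set.mem_iUnion, Set.mem_iInter, Set.mem_preimage, Set.mem_singleton_iff]
    refine ⟨fun t => Y t ω, fun q hq => ?_⟩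
    by_cases hqT : q ∈ T
    · simp [w, hqT]
    · obtain ⟨t, ht, rfl⟩ := mem_map.1 ((mem_union.1 hq).resolve_left hqT)
      simp [w, ht, hω t ht]
  have hcyl : ∀ v, μ (⋂ q ∈ U, Y q ⁻¹' {w v q}) ≤ 2⁻¹ ^ (2 * #T) := by
    intro v
    rw [hY.meas_biInter fun q _ => ⟨{w v q}, trivial, rfl⟩, ← hU]
    exact prod_le_pow_card _ _ _ fun q _ => hhalf q (w v q)
  calc μ {ω | ∀ t ∈ T, Y t ω = Y (e t) ω}
      ≤ ∑ v : T → Bool, μ (⋂ q ∈ U, Y q ⁻¹' {w v q}) :=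
        (measure_mono hsub).trans (measure_iUnion_fintype_le _ _)
    _ ≤ ∑ _v : T → Bool, 2⁻¹ ^ (2 * #T) := sum_le_sum fun v _ => hcyl v
    _ = 2⁻¹ ^ #T := by
        rw [sum_const, card_univ, Fintype.card_fun, Fintype.card_coe, Fintype.card_bool,
          nsmul_eq_mul, Nat.cast_pow, Nat.cast_ofNat, two_mul, pow_add, ← mul_assoc, ← mul_pow,
          ENNReal.mul_inv_cancel two_ne_zero ENNReal.ofNat_ne_top, one_pow, one_mul]

theorem Sym2.card_filter_mk_eq_le_two {α : Type*} [DecidableEq α] (D : Finset (α × α))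
    (z : Sym2 α) : #{q ∈ D | s(q.1, q.2) = z} ≤ 2 := by
  induction z using Sym2.ind with | _ a b
  calc #{q ∈ D | s(q.1, q.2) = s(a, b)} ≤ #{(a, b), (b, a)} := card_le_card fun q hq => by
          obtain ⟨x, y⟩ := q
          simp only [mem_filter, Sym2.eq_iff] at hq
          simp only [mem_insert, mem_singleton, Prod.mk.injEq]
          tauto
    _ ≤ 2 := card_le_two

def Equiv.Perm.sym2Map {α : Type*} (π : Equiv.Perm α) : Equiv.Perm (Sym2 α) where
  toFun := Sym2.map π
  invFun := Sym2.map π.symm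
  left_inv z := by simp [Sym2.map_map]
  right_inv z := by simp [Sym2.map_map]

section Edges

variable {α : Type*} [DecidableEq α]

def movedEdges (π : Equiv.Perm α) (M : Finset α) : Finset (Sym2 α) :=
  {z ∈ M.sym2 | ¬ z.IsDiag ∧ z.map π ≠ z}

theorem card_moved_mul_le_two_mul_card_movedEdges (π : Equiv.Perm α) (M : Finset α) :
    #{i ∈ M | π i ≠ i} * (#M - 2) ≤ 2 * #(movedEdges π M) := by
  set F := {i ∈ M | π i ≠ i}
  set D := {q ∈ F ×ˢ M | q.2 ≠ q.1 ∧ q.2 ≠ π q.1}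
  have hD : #F * (#M - 2) ≤ #D := by
    have hbad : #{q ∈ F ×ˢ M | ¬(q.2 ≠ q.1 ∧ q.2 ≠ π q.1)} ≤ 2 * #F :=
      calc _ ≤ #(F.image (fun i => (i, i)) ∪ F.image (fun i => (i, π i))) :=
            card_le_card fun q hq => by
              obtain ⟨i, j⟩ := q
              simp only [mem_filter, mem_product, not_and_or, not_not] at hq
              rcases hq with ⟨⟨hi, -⟩, rfl | rfl⟩ <;> simp [hi]
        _ ≤ #F + #F := (card_union_le _ _).trans (add_le_add card_image_le card_image_le)
        _ = 2 * #F := (two_mul _).symm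
    have hsplit : #D + #{q ∈ F ×ˢ M | ¬(q.2 ≠ q.1 ∧ q.2 ≠ π q.1)} = #F * #M := by
      rw [← card_product]
      exact card_filter_add_card_filter_not _
    rw [Nat.mul_sub]
    omega
  have hDE : #D ≤ 2 * #(movedEdges π M) := by
    refine card_le_mul_card_image_of_maps_to (f := fun q => s(q.1, q.2)) ?_ 2
      fun z _ => Sym2.card_filter_mk_eq_le_two D z
    rintro ⟨i, j⟩ hq
    simp only [D, F, mem_filter, mem_product] at hq
    obtain ⟨⟨⟨hi, hπi⟩, hj⟩, hji, hjπ⟩ := hq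
    simp only [movedEdges, mem_filter, mk_mem_sym2_iff, Sym2.mk_isDiag_iff, Sym2.map_mk,
      ne_eq, Sym2.eq_iff]
    refine ⟨⟨hi, hj⟩, Ne.symm hji, ?_⟩
    rintro (⟨h, -⟩ | ⟨h, -⟩)
    · exact hπi h
    · exact hjπ h.symm
  exact hD.trans hDE

end Edges

theorem Sym2.inf_lt_sup {α : Type*} [LinearOrder α] {z : Sym2 α} (hz : ¬ z.IsDiag) :
    z.inf < z.sup := by
  induction z using Sym2.ind with | _ a b
  simpa [eq_comm] using hz

def Equiv.Perm.edgePerm {α : Type*} (π : Equiv.Perm α) :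
    Equiv.Perm {z : Sym2 α // ¬ z.IsDiag} :=
  π.sym2Map.subtypePerm fun _ => (Sym2.isDiag_map π.injective).not

section EdgeBits

variable {α Ω : Type*} [LinearOrder α]

def Sym2.toOrderedPair (z : {z : Sym2 α // ¬ z.IsDiag}) : {p : α × α // p.1 < p.2} :=
  ⟨(z.1.inf, z.1.sup), Sym2.inf_lt_sup z.2⟩

theorem Sym2.toOrderedPair_injective : Function.Injective (Sym2.toOrderedPair (α := α)) :=
  fun _ _ h => Subtype.ext <| Sym2.inf_eq_inf_and_sup_eq_sup.1 <|
    Prod.ext_iff.1 (congrArg Subtype.val h)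

def edgeBits (X : α → α → Ω → Bool) (z : {z : Sym2 α // ¬ z.IsDiag}) : Ω → Bool :=
  X z.1.inf z.1.sup

theorem edgeBits_mk {X : α → α → Ω → Bool} (hX : ∀ i j, X i j = X j i) {a b : α}
    (h : ¬ s(a, b).IsDiag) : edgeBits X ⟨s(a, b), h⟩ = X a b := by
  rcases le_total a b with hab | hab <;> simp [edgeBits, hab, hX b a]

theorem iIndepFun_edgeBits [MeasurableSpace Ω] {μ : Measure Ω} {X : α → α → Ω → Bool}
    (hX : iIndepFun (fun p : {p : α × α // p.1 < p.2} => X p.1.1 p.1.2) μ) :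
    iIndepFun (edgeBits X) μ :=
  hX.precomp (g := Sym2.toOrderedPair) Sym2.toOrderedPair_injective

theorem edgeBits_eq_edgePerm_of_forall {X : α → α → Ω → Bool} (hX : ∀ i j, X i j = X j i)
    (π : Equiv.Perm α) {M : Finset α} {ω : Ω}
    (hω : ∀ i j, i < j → j ∈ M → X i j ω = X (π i) (π j) ω)
    {z : {z : Sym2 α // ¬ z.IsDiag}} (hz : z.1 ∈ M.sym2) :
    edgeBits X z ω = edgeBits X (π.edgePerm z) ω := by
  obtain ⟨z, hdiag⟩ := z
  induction z using Sym2.ind with | _ a b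
  have hab : a ≠ b := by simpa using hdiag
  have hπ : π.edgePerm ⟨s(a, b), hdiag⟩ = ⟨s(π a, π b), by simpa using π.injective.ne hab⟩ :=
    rfl
  rw [Finset.mk_mem_sym2_iff] at hz
  rw [hπ, edgeBits_mk hX, edgeBits_mk hX]
  rcases lt_or_gt_of_ne hab with h | h
  · exact hω a b h hz.2
  · rw [hX a b, hX (π a)]
    exact hω b a h hz.1

end EdgeBits

theorem measure_setOf_eq_eq_half {Ω : Type*} [MeasurableSpace Ω] {μ : Measure Ω}
    [IsProbabilityMeasure μ] {f : Ω → Bool} (hf : Measurable f)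
    (h : μ {ω | f ω = true} = 1 / 2) (b : Bool) : μ {ω | f ω = b} = 1 / 2 := by
  cases b
  · have hc : {ω | f ω = false} = {ω | f ω = true}ᶜ := by ext; simp
    rw [hc, prob_compl_eq_one_sub (μ := μ) (s := {ω | f ω = true})
      (hf (measurableSet_singleton true)), h, one_div, ENNReal.one_sub_inv_two]
  · exact h

theorem inv_two_pow_le_ofReal_mul_exp {m k t : ℕ} (hkm : k ≤ m)
    (h : (m - k) * (m - 2) ≤ 6 * t) :
    (2⁻¹ : ℝ≥0∞) ^ t ≤
      ENNReal.ofReal (4 * Real.exp (-(Real.log 2 / 12) * ((m : ℝ) - k) * m)) := by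
  have hnat : (m - k) * m ≤ 12 * t + 24 := by
    rcases le_or_gt 4 m with hm | hm
    · calc (m - k) * m ≤ (m - k) * (2 * (m - 2)) := Nat.mul_le_mul_left _ (by omega)
        _ = 2 * ((m - k) * (m - 2)) := by ring
        _ ≤ 12 * t + 24 := by omega
    · calc (m - k) * m ≤ 3 * 3 := Nat.mul_le_mul (by omega) (by omega)
        _ ≤ 12 * t + 24 := by omega
  have hreal : ((m : ℝ) - k) * m ≤ 12 * t + 24 := by
    have := (Nat.cast_le (α := ℝ)).2 hnat
    push_cast [Nat.cast_sub hkm] at this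
    exact this
  have hpow : (2⁻¹ : ℝ≥0∞) ^ t = ENNReal.ofReal (Real.exp (-(t * Real.log 2))) := by
    rw [Real.exp_neg, Real.exp_nat_mul, Real.exp_log two_pos,
      ENNReal.ofReal_inv_of_pos (by positivity), ENNReal.ofReal_pow zero_le_two,
      ENNReal.ofReal_ofNat, ENNReal.inv_pow]
  have hfour : Real.exp (2 * Real.log 2) = 4 := by
    rw [show (2 : ℝ) * Real.log 2 = (2 : ℕ) * Real.log 2 by norm_num, Real.exp_nat_mul,
      Real.exp_log two_pos]
    norm_num
  rw [hpow, ← hfour, ← Real.exp_add]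
  refine ENNReal.ofReal_le_ofReal (Real.exp_le_exp.2 ?_)
  nlinarith [Real.log_pos one_lt_two]

theorem stmt_3 :
    ∃ C₁ C₂ : ℝ, 0 < C₁ ∧ 0 < C₂ ∧
      ∀ (n m : ℕ), 1 ≤ m → m ≤ n →
      ∀ (Ω : Type) (_ : MeasurableSpace Ω) (μ : Measure Ω), IsProbabilityMeasure μ →
      ∀ (X : Fin n → Fin n → Ω → Bool),
        (∀ i j, Measurable (X i j)) →
        (∀ i j, X i j = X j i) →
        (∀ i j : Fin n, i < j → μ {ω | X i j ω = true} = 1 / 2) →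
        iIndepFun
          (fun p : {p : Fin n × Fin n // p.1 < p.2} => X p.1.1 p.1.2) μ →
      ∀ (π : Equiv.Perm (Fin n)),
        ∀ k : ℕ, k = (Finset.univ.filter (fun i : Fin n => π i = i ∧ (i : ℕ) < m)).card →
        μ {ω | ∀ i j : Fin n, i < j → (j : ℕ) < m → X i j ω = X (π i) (π j) ω}
          ≤ ENNReal.ofReal (C₁ * Real.exp (-C₂ * ((m : ℝ) - k) * m)) := by
  classical
  refine ⟨4, Real.log 2 / 12, by norm_num, by positivity, ?_⟩
  intro n m _ hmn Ω _ μ _ X hXmeas hXsymm hXhalf hXindep π k hk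
  set M : Finset (Fin n) := {i | (i : ℕ) < m}
  have hM : #M = m := by simp [M, Fin.card_filter_val_lt, hmn]
  have hfix : k = #{i ∈ M | π i = i} := by
    rw [hk, filter_filter]
    simp only [and_comm]
  have hmoved : m - k = #{i ∈ M | π i ≠ i} := by
    rw [hfix, ← hM, ← card_filter_add_card_filter_not (s := M) (fun i => π i = i),
      Nat.add_sub_cancel_left]
  set S := (movedEdges π M).subtype fun z => ¬ z.IsDiag
  have hS : #S = #(movedEdges π M) :=
    (card_subtype _ _).trans (congrArg card (filter_true_of_mem fun z hz => (mem_filter.1 hz).2.1))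
  obtain ⟨T, hTS, hTsep, hST⟩ := π.edgePerm.exists_subset_forall_apply_notMem_card_le S
    fun z hz h => (mem_filter.1 (mem_subtype.1 hz)).2.2 (congrArg Subtype.val h)
  have hT : (m - k) * (m - 2) ≤ 6 * #T := by
    have := card_moved_mul_le_two_mul_card_movedEdges π M
    rw [hM, ← hmoved] at this
    omega
  calc μ {ω | ∀ i j : Fin n, i < j → (j : ℕ) < m → X i j ω = X (π i) (π j) ω}
      ≤ μ {ω | ∀ z ∈ T, edgeBits X z ω = edgeBits X (π.edgePerm z) ω} :=
        measure_mono fun ω hω z hz => edgeBits_eq_edgePerm_of_forall hXsymm π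
          (fun i j hij hj => hω i j hij (by simpa [M] using hj))
          (mem_filter.1 (mem_subtype.1 (hTS hz))).1
    _ ≤ 2⁻¹ ^ #T := measure_forall_eq_apply_perm_le (iIndepFun_edgeBits hXindep)
        (fun z b => ((measure_setOf_eq_eq_half (hXmeas _ _)
          (hXhalf _ _ (Sym2.inf_lt_sup z.2)) b).trans (one_div _)).le) _ hTsep
    _ ≤ _ := inv_two_pow_le_ofReal_mul_exp (hM ▸ hfix ▸ card_filter_le _ _) hT
end

section
/- For $n \ge 1$ and $2n/3 \le m \le n$, define $\phi(m,n) = \sum_{\pi \in S_n} \mathbb{P}(X(i,j) = X(\pi(i),\pi(j)) \text{ for all } 1 \le i < j \le m)$, where $(X(i,j))_{1 \le i < j \le n}$ are i.i.d. Bernoulli(1/2). Then there exist positive universal constants $K_1, K_2$ such that $\phi(m,n) \le K_1 e^{K_2 (n-m) \log(n-m)}$, where $0 \log 0$ is interpreted as $0$. -/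
open MeasureTheory ProbabilityTheory Finset
open scoped ENNReal

/-!
Split the sum according to the set `D` of vertices among the first `m` that `π` moves. At most
`C(m, j) (n - m + j)!` permutations have `|D| = j`. Greedily pick `I ⊆ D` with `π(I) ∩ I = ∅`
and `|I| ≥ |D| / 3` (shrunk to at most `m / 8` vertices), and let `J` be the remaining low
vertices outside `I ∪ π(I)`. The `|I| |J|` edges between `I` and `J` and their `π`-images are
`2 |I| |J|` distinct edges, so preserving the pattern on them has probability `2^{-|I| |J|}`,
which is at most `2^{-j m / 24}`. For `m` large, `C(m, j) (n - m + j)! 2^{-j m / 24}` is at most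
`(n - m)^{n - m} 2^{-j}`, and summing over `j` gives `2 (n - m)^{n - m}`; the finitely many `n`
below the threshold are absorbed into `K₁`.
-/

section FairBits

variable {Ω ι : Type*} [MeasurableSpace Ω] {μ : Measure Ω} [IsProbabilityMeasure μ]

lemma measure_eq_eq_of_indepFun {Z W : Ω → Bool} (hind : IndepFun Z W μ) (hZ : Measurable Z)
    (hW : Measurable W) (hW_fair : μ {ω | W ω = true} = 2⁻¹) :
    μ {ω | Z ω = W ω} = 2⁻¹ := by
  have hW_false : μ {ω | W ω = false} = 2⁻¹ := by
    have : {ω | W ω = false} = (W ⁻¹' {true})ᶜ := by ext ω; simp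
    rw [this, measure_compl (hW (measurableSet_singleton true)) (measure_ne_top _ _),
      measure_univ]
    exact hW_fair ▸ ENNReal.one_sub_inv_two
  have hsplit : {ω | Z ω = W ω} = Z ⁻¹' {true} ∩ W ⁻¹' {true} ∪ Z ⁻¹' {false} ∩ W ⁻¹' {false} := by
    ext ω; cases h₁ : Z ω <;> cases h₂ : W ω <;> simp [h₁, h₂]
  have hZ_compl : Z ⁻¹' {false} = (Z ⁻¹' {true})ᶜ := by ext ω; simp
  rw [hsplit, measure_union (by rw [Set.disjoint_left]; aesop)
      ((hZ (measurableSet_singleton _)).inter (hW (measurableSet_singleton _))),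
    hind.measure_inter_preimage_eq_mul _ _ (measurableSet_singleton _) (measurableSet_singleton _),
    hind.measure_inter_preimage_eq_mul _ _ (measurableSet_singleton _) (measurableSet_singleton _)]
  change _ * μ {ω | W ω = true} + _ * μ {ω | W ω = false} = _
  rw [hW_fair, hW_false, ← add_mul, hZ_compl,
    measure_add_measure_compl (hZ (measurableSet_singleton _)), measure_univ, one_mul]

theorem measure_biInter_eq_comp_eq [DecidableEq ι] {Y : ι → Ω → Bool}
    (hY : ∀ i, Measurable (Y i)) (hind : iIndepFun Y μ) (hfair : ∀ i, μ {ω | Y i ω = true} = 2⁻¹)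
    (g : ι → ι) (T : Finset ι) (hg : Set.InjOn g T) (hT : ∀ i ∈ T, g i ∉ T) :
    μ (⋂ i ∈ T, {ω | Y i ω = Y (g i) ω}) = 2⁻¹ ^ #T := by
  induction T using Finset.induction_on with
  | empty => simp
  | @insert a s ha ih =>
    let S₁ : Finset ι := {a, g a}
    let S₂ : Finset ι := s ∪ s.image g
    have hga : g a ∉ insert a s := hT a (mem_insert_self a s)
    -- The event at `a` and the events over `s` are read off disjoint sets of coordinates.
    have hdisj : Disjoint S₁ S₂ := by
      simp only [S₁, S₂, disjoint_insert_left, disjoint_singleton_left, mem_union, mem_image,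
        not_or, not_exists, not_and]
      refine ⟨⟨ha, fun t ht hta => hT t (mem_insert_of_mem ht) (hta ▸ mem_insert_self a s)⟩,
        fun h => hga (mem_insert_of_mem h), fun t ht hta => ha ?_⟩
      exact hg (mem_insert_of_mem ht) (mem_insert_self a s) hta ▸ ht
    have hfirst : {ω | Y a ω = Y (g a) ω} = (fun ω (i : S₁) => Y i ω) ⁻¹'
        {f | f ⟨a, by simp [S₁]⟩ = f ⟨g a, by simp [S₁]⟩} := rfl
    have hrest : (⋂ i ∈ s, {ω | Y i ω = Y (g i) ω}) = (fun ω (i : S₂) => Y i ω) ⁻¹'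
        {f | ∀ (i : ι) (hi : i ∈ s),
          f ⟨i, mem_union_left _ hi⟩ = f ⟨g i, mem_union_right _ (mem_image_of_mem g hi)⟩} := by
      ext ω; simp
    rw [set_biInter_insert, hfirst, hrest,
      (hind.indepFun_finset S₁ S₂ hdisj hY).measure_inter_preimage_eq_mul _ _
        (Set.to_countable _).measurableSet (Set.to_countable _).measurableSet, ← hfirst, ← hrest,
      measure_eq_eq_of_indepFun (hind.indepFun fun h : a = g a => hga (h ▸ mem_insert_self a s))
        (hY a) (hY _) (hfair _),
      ih (hg.mono (by simp)) fun i hi hgi => hT i (mem_insert_of_mem hi) (mem_insert_of_mem hgi),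
      card_insert_of_notMem ha, pow_succ']

end FairBits

namespace Sym2

variable {α : Type*} [LinearOrder α]

lemma inf_lt_sup_of_not_isDiag {s : Sym2 α} (h : ¬ s.IsDiag) : s.inf < s.sup := by
  induction s with | _ a b => exact min_lt_max.mpr (by simpa using h)

lemma lift_inf_sup {β : Type*} {f : α → α → β} (hf : ∀ a b, f a b = f b a) (a b : α) :
    f s(a, b).inf s(a, b).sup = f a b := by
  rcases le_total a b with h | h <;> simp [h, hf b a]

lemma card_image_product_of_disjoint {I J : Finset α} (hIJ : Disjoint I J) :
    #((I ×ˢ J).image fun p => s(p.1, p.2)) = #I * #J := by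
  rw [card_image_of_injOn, card_product]
  rintro ⟨u, v⟩ huv ⟨u', v'⟩ huv' h
  rcases Sym2.eq_iff.mp h with h | ⟨rfl, rfl⟩
  · exact Prod.ext h.1 h.2
  · exact absurd (mem_product.mp huv).1 (disjoint_right.mp hIJ (mem_product.mp huv').2)

end Sym2

section Separated

variable {α : Type*} [DecidableEq α]

theorem Equiv.Perm.exists_subset_apply_notMem (π : Equiv.Perm α) (M : Finset α)
    (hM : ∀ x ∈ M, π x ≠ x) : ∃ I ⊆ M, (∀ x ∈ I, π x ∉ I) ∧ #M ≤ 3 * #I := by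
  induction M using Finset.strongInduction with
  | _ M ih =>
    obtain rfl | ⟨x, hx⟩ := M.eq_empty_or_nonempty
    · exact ⟨∅, by simp⟩
    -- `x` can only clash with `π x` and `π⁻¹ x`.
    set M' := M \ {x, π x, π.symm x}
    have hM' : M' ⊂ M := (ssubset_iff_of_subset sdiff_subset).mpr ⟨x, hx, by simp⟩
    obtain ⟨I, hIM', hI, hcard⟩ := ih M' hM' fun y hy => hM y (hM'.subset hy)
    have hxI : x ∉ I := fun h => by simpa [M'] using hIM' h
    have hπxI : π x ∉ I := fun h => by simpa [M'] using hIM' h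
    have hπsxI : π.symm x ∉ I := fun h => by simpa [M'] using hIM' h
    refine ⟨insert x I, insert_subset hx (hIM'.trans sdiff_subset), ?_, ?_⟩
    · simp only [mem_insert, forall_eq_or_imp, not_or]
      refine ⟨⟨hM x hx, hπxI⟩, fun y hy => ⟨fun h => hπsxI ?_, hI y hy⟩⟩
      rwa [← h, Equiv.symm_apply_apply]
    · have : #M ≤ #M' + 3 :=
        card_le_card_sdiff_add_card.trans (Nat.add_le_add_left card_le_three _)
      rw [card_insert_of_notMem hxI]
      omega

lemma mul_div_twentyfour_le_min_mul {d i j l : ℕ} (hd₃ : d ≤ 3 * i) (hdl : d ≤ l)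
    (hj : l ≤ j + 2 * min i (l / 8)) : d * (l / 24) ≤ min i (l / 8) * j := by
  rcases le_total i (l / 8) with h | h
  · rw [min_eq_left h] at hj ⊢
    calc d * (l / 24) ≤ 3 * i * (l / 24) := Nat.mul_le_mul_right _ hd₃
      _ ≤ i * j := by rw [mul_comm 3, mul_assoc]; exact Nat.mul_le_mul_left _ (by omega)
  · rw [min_eq_right h] at hj ⊢
    calc d * (l / 24) ≤ 3 * (l - 2 * (l / 8)) * (l / 24) := Nat.mul_le_mul_right _ (by omega)
      _ = (l - 2 * (l / 8)) * (3 * (l / 24)) := by ring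
      _ ≤ j * (l / 8) := Nat.mul_le_mul (by omega) (by omega)
      _ = l / 8 * j := mul_comm _ _

theorem exists_separated_subsets (π : Equiv.Perm α) (L : Finset α) :
    ∃ I J : Finset α, I ⊆ L ∧ J ⊆ L ∧ Disjoint I J ∧ (∀ x ∈ I, π x ∉ I ∪ J) ∧
      #{x ∈ L | π x ≠ x} * (#L / 24) ≤ #I * #J := by
  obtain ⟨I₀, hI₀, hπI₀, hcard⟩ :=
    π.exists_subset_apply_notMem {x ∈ L | π x ≠ x} fun x hx => (mem_filter.mp hx).2
  -- A small `I` leaves room for a large `J`.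
  obtain ⟨I, hII₀, hIcard⟩ := exists_subset_card_eq (min_le_left #I₀ (#L / 8))
  refine ⟨I, L \ (I ∪ I.image π), hII₀.trans (hI₀.trans (filter_subset _ _)), sdiff_subset,
    disjoint_sdiff.mono_left subset_union_left, fun x hx => ?_, ?_⟩
  · have : π x ∉ I := fun h => hπI₀ x (hII₀ hx) (hII₀ h)
    simp [this, hx]
  · rw [hIcard]
    apply mul_div_twentyfour_le_min_mul hcard (card_le_card (filter_subset _ _))
    calc #L ≤ #(L \ (I ∪ I.image π)) + #(I ∪ I.image π) := card_le_card_sdiff_add_card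
      _ ≤ #(L \ (I ∪ I.image π)) + (#I + #I) :=
        Nat.add_le_add_left ((card_union_le _ _).trans (Nat.add_le_add_left card_image_le _)) _
      _ = _ := by rw [hIcard]; ring

end Separated

section PermCount

variable {α : Type*} [DecidableEq α] [Fintype α]

lemma card_perm_fixing_compl (C : Finset α) :
    #{π : Equiv.Perm α | ∀ x ∉ C, π x = x} = (#C).factorial := by
  rw [← Fintype.card_subtype, ← Fintype.card_congr (Equiv.Perm.subtypeEquivSubtypePerm (· ∈ C)),
    Fintype.card_perm, Fintype.card_coe]

lemma card_perm_moved_eq_le (L S : Finset α) :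
    #{π : Equiv.Perm α | {x ∈ L | π x ≠ x} = S} ≤ (#Lᶜ + #S).factorial := by
  calc #{π : Equiv.Perm α | {x ∈ L | π x ≠ x} = S}
      ≤ #{π : Equiv.Perm α | ∀ x ∉ S ∪ Lᶜ, π x = x} := by
        refine card_le_card fun π hπ => mem_filter.mpr ⟨mem_univ _, fun x hx => ?_⟩
        rw [← (mem_filter.mp hπ).2] at hx
        simp only [ne_eq, mem_union, mem_filter, mem_compl, not_or, not_and, not_not] at hx
        exact hx.1 hx.2
    _ ≤ (#Lᶜ + #S).factorial := by
        rw [card_perm_fixing_compl, add_comm]; exact Nat.factorial_le (card_union_le _ _)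

lemma sum_perm_le_sum_choose (L : Finset α) (c : ℕ → ℝ) (hc : ∀ j, 0 ≤ c j) :
    ∑ π : Equiv.Perm α, c #{x ∈ L | π x ≠ x} ≤
      ∑ j ∈ range (#L + 1), (#L).choose j * (#Lᶜ + j).factorial * c j := by
  calc ∑ π : Equiv.Perm α, c #{x ∈ L | π x ≠ x}
      = ∑ S ∈ L.powerset, ∑ π : Equiv.Perm α with {x ∈ L | π x ≠ x} = S,
          c #{x ∈ L | π x ≠ x} :=
        (sum_fiberwise_of_maps_to (fun π _ => mem_powerset.mpr (filter_subset _ _)) _).symm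
    _ = ∑ S ∈ L.powerset, #{π : Equiv.Perm α | {x ∈ L | π x ≠ x} = S} * c #S := by
        refine sum_congr rfl fun S _ => ?_
        rw [sum_congr rfl fun π hπ => by rw [(mem_filter.mp hπ).2], sum_const, nsmul_eq_mul]
    _ ≤ ∑ S ∈ L.powerset, ((#Lᶜ + #S).factorial : ℝ) * c #S := by
        gcongr with S
        · exact hc _
        · exact_mod_cast card_perm_moved_eq_le L S
    _ = ∑ j ∈ range (#L + 1), (#L).choose j * (#Lᶜ + j).factorial * c j := by
        rw [sum_powerset_apply_card (fun j => ((#Lᶜ + j).factorial : ℝ) * c j)]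
        simp only [nsmul_eq_mul, mul_assoc]

end PermCount

section Estimates

lemma mul_sq_succ_le_two_pow {t : ℕ} (ht : 20 ≤ t) : 2304 * (t + 1) ^ 2 ≤ 2 ^ t := by
  induction t, ht using Nat.le_induction with
  | base => norm_num
  | succ t ht ih =>
    have : (t + 2) ^ 2 ≤ 2 * (t + 1) ^ 2 := by nlinarith
    rw [pow_succ 2 t]
    nlinarith

lemma four_mul_sq_le_two_pow_div {m : ℕ} (hm : 480 ≤ m) : 4 * m ^ 2 ≤ 2 ^ (m / 24) :=
  calc 4 * m ^ 2 ≤ 4 * (24 * (m / 24 + 1)) ^ 2 := by gcongr; omega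
    _ = 2304 * (m / 24 + 1) ^ 2 := by ring
    _ ≤ 2 ^ (m / 24) := mul_sq_succ_le_two_pow (by omega)

lemma choose_mul_factorial_mul_two_pow_le {m r j e : ℕ} (hr : r ≤ m) (hj : j ≤ m)
    (he : 4 * m ^ 2 ≤ 2 ^ e) : m.choose j * (r + j).factorial * 2 ^ j ≤ r ^ r * 2 ^ (j * e) := by
  have hfact : (r + j).factorial ≤ r ^ r * (2 * m) ^ j := by
    rw [← Nat.factorial_mul_descFactorial (Nat.le_add_left j r), Nat.add_sub_cancel]
    exact Nat.mul_le_mul (Nat.factorial_le_pow r)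
      ((Nat.descFactorial_le_pow _ _).trans (Nat.pow_le_pow_left (by omega) _))
  calc m.choose j * (r + j).factorial * 2 ^ j ≤ m ^ j * (r ^ r * (2 * m) ^ j) * 2 ^ j := by
        gcongr
        exact Nat.choose_le_pow m j
    _ = r ^ r * (4 * m ^ 2) ^ j := by
        rw [show 4 * m ^ 2 = m * (2 * m) * 2 by ring, mul_pow, mul_pow]; ring
    _ ≤ r ^ r * 2 ^ (j * e) := by
        rw [mul_comm j, pow_mul]
        gcongr

lemma sum_choose_mul_factorial_le {m r : ℕ} (hm : 480 ≤ m) (hr : r ≤ m) :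
    ∑ j ∈ range (m + 1), (m.choose j : ℝ) * (r + j).factorial * 2⁻¹ ^ (j * (m / 24)) ≤
      2 * r ^ r :=
  calc ∑ j ∈ range (m + 1), (m.choose j : ℝ) * (r + j).factorial * 2⁻¹ ^ (j * (m / 24))
      ≤ ∑ j ∈ range (m + 1), (r : ℝ) ^ r * 2⁻¹ ^ j := by
        refine sum_le_sum fun j hj => ?_
        have := choose_mul_factorial_mul_two_pow_le hr (Nat.lt_succ_iff.mp (mem_range.mp hj))
          (four_mul_sq_le_two_pow_div hm)
        rw [inv_pow, inv_pow, ← div_eq_mul_inv, ← div_eq_mul_inv,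
          div_le_div_iff₀ (by positivity) (by positivity)]
        exact_mod_cast this
    _ = r ^ r * ∑ j ∈ range (m + 1), (1 / 2 : ℝ) ^ j := by rw [mul_sum, one_div]
    _ ≤ 2 * r ^ r := by
        rw [mul_comm 2]
        exact mul_le_mul_of_nonneg_left (sum_geometric_two_le _) (by positivity)

lemma natCast_pow_self_eq_exp (r : ℕ) : (r : ℝ) ^ r = Real.exp (r * Real.log r) := by
  rcases Nat.eq_zero_or_pos r with rfl | hr
  · simp
  · rw [← Real.rpow_natCast, Real.rpow_def_of_pos (by exact_mod_cast hr), mul_comm]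

end Estimates

structure IsUniformRandomGraph {α Ω : Type*} [LinearOrder α] [MeasurableSpace Ω]
    (X : α → α → Ω → Bool) (μ : Measure Ω) : Prop where
  measurable : ∀ i j, Measurable (X i j)
  symm : ∀ i j, X i j = X j i
  fair : ∀ i j, i < j → μ {ω | X i j ω = true} = 2⁻¹
  indep : iIndepFun (fun p : {p : α × α // p.1 < p.2} => X p.1.1 p.1.2) μ

namespace IsUniformRandomGraph

variable {α Ω : Type*} [LinearOrder α] [MeasurableSpace Ω] {μ : Measure Ω}
  {X : α → α → Ω → Bool}

lemma iIndepFun_sym2 (hG : IsUniformRandomGraph X μ) :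
    iIndepFun (fun s : {s : Sym2 α // ¬ s.IsDiag} => X s.1.inf s.1.sup) μ :=
  hG.indep.precomp (g := fun s : {s : Sym2 α // ¬ s.IsDiag} =>
    ⟨(s.1.inf, s.1.sup), Sym2.inf_lt_sup_of_not_isDiag s.2⟩) fun _ _ h => Subtype.ext <|
      Sym2.inf_eq_inf_and_sup_eq_sup.mp (Prod.ext_iff.mp (congrArg Subtype.val h))

theorem measure_preserves_edges_between_eq [IsProbabilityMeasure μ]
    (hG : IsUniformRandomGraph X μ) (π : Equiv.Perm α)
    {I J : Finset α} (hIJ : Disjoint I J) (hπI : ∀ x ∈ I, π x ∉ I ∪ J) :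
    μ {ω | ∀ i ∈ I, ∀ j ∈ J, X i j ω = X (π i) (π j) ω} = 2⁻¹ ^ (#I * #J) := by
  -- Reindex the edges by unordered pairs, on which `π` acts by `Sym2.map`.
  let Y (s : {s : Sym2 α // ¬ s.IsDiag}) : Ω → Bool := X s.1.inf s.1.sup
  let g (s : {s : Sym2 α // ¬ s.IsDiag}) : {s : Sym2 α // ¬ s.IsDiag} :=
    ⟨s.1.map π, by rw [Sym2.isDiag_map π.injective]; exact s.2⟩
  have hne : ∀ p ∈ I ×ˢ J, p.1 ≠ p.2 := fun p hp h =>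
    disjoint_left.mp hIJ (mem_product.mp hp).1 (h ▸ (mem_product.mp hp).2)
  let T := ((I ×ˢ J).image fun p => s(p.1, p.2)).subtype (fun s => ¬ s.IsDiag)
  have hmemT : ∀ s, s ∈ T ↔ ∃ u ∈ I, ∃ v ∈ J, s(u, v) = s.1 := by
    simp [T, and_assoc]
  have hcard : #T = #I * #J := by
    rw [card_subtype, filter_true_of_mem, Sym2.card_image_product_of_disjoint hIJ]
    simp only [mem_image, forall_exists_index, and_imp]
    rintro s p hp rfl
    exact Sym2.mk_isDiag_iff.not.mpr (hne p hp)
  have hevent : {ω | ∀ i ∈ I, ∀ j ∈ J, X i j ω = X (π i) (π j) ω} =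
      ⋂ s ∈ T, {ω | Y s ω = Y (g s) ω} := by
    ext ω
    simp only [Set.mem_ofPred_eq, Set.mem_iInter, hmemT]
    constructor
    · rintro h ⟨s, hs⟩ ⟨u, hu, v, hv, rfl⟩
      simp only [Y, g, Sym2.map_mk, Sym2.lift_inf_sup (fun a b => congrFun (hG.symm a b) ω)]
      exact h u hu v hv
    · intro h u hu v hv
      have := h ⟨s(u, v), Sym2.mk_isDiag_iff.not.mpr (hne (u, v) (mem_product.mpr ⟨hu, hv⟩))⟩
        ⟨u, hu, v, hv, rfl⟩
      simpa only [Y, g, Sym2.map_mk, Sym2.lift_inf_sup (fun a b => congrFun (hG.symm a b) ω)]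
        using this
  rw [hevent, measure_biInter_eq_comp_eq (fun s => hG.measurable _ _) hG.iIndepFun_sym2
    (fun s => hG.fair _ _ (Sym2.inf_lt_sup_of_not_isDiag s.2)) g T, hcard]
  · exact fun s _ t _ h => Subtype.ext (Sym2.map.injective π.injective (congrArg Subtype.val h))
  · rintro s hs hgs
    obtain ⟨u, hu, v, hv, hs⟩ := (hmemT s).mp hs
    obtain ⟨u', hu', v', hv', hgs⟩ := (hmemT (g s)).mp hgs
    have : π u ∈ s(u', v') := by simp [hgs, g, ← hs]
    rcases Sym2.mem_iff.mp this with h | h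
    · exact hπI u hu (mem_union_left _ (h ▸ hu'))
    · exact hπI u hu (mem_union_right _ (h ▸ hv'))

theorem measure_preserves_edges_within_le [IsProbabilityMeasure μ]
    (hG : IsUniformRandomGraph X μ) (π : Equiv.Perm α)
    (L : Finset α) :
    μ {ω | ∀ i ∈ L, ∀ j ∈ L, i < j → X i j ω = X (π i) (π j) ω} ≤
      2⁻¹ ^ (#{x ∈ L | π x ≠ x} * (#L / 24)) := by
  obtain ⟨I, J, hIL, hJL, hIJ, hπI, hcard⟩ := exists_separated_subsets π L
  calc μ {ω | ∀ i ∈ L, ∀ j ∈ L, i < j → X i j ω = X (π i) (π j) ω}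
      ≤ μ {ω | ∀ i ∈ I, ∀ j ∈ J, X i j ω = X (π i) (π j) ω} := by
        refine measure_mono fun ω h i hi j hj => ?_
        have hij : i ≠ j := by rintro rfl; exact disjoint_left.mp hIJ hi hj
        rcases hij.lt_or_gt with hij | hji
        · exact h i (hIL hi) j (hJL hj) hij
        · rw [hG.symm i j, hG.symm (π i) (π j)]
          exact h j (hJL hj) i (hIL hi) hji
    _ = 2⁻¹ ^ (#I * #J) := hG.measure_preserves_edges_between_eq π hIJ hπI
    _ ≤ 2⁻¹ ^ (#{x ∈ L | π x ≠ x} * (#L / 24)) :=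
        pow_le_pow_of_le_one zero_le (ENNReal.inv_le_one.mpr one_le_two) hcard

theorem sum_measure_preserves_edges_within_le [Fintype α] [IsProbabilityMeasure μ]
    (hG : IsUniformRandomGraph X μ)
    (L : Finset α) (hL : 480 ≤ #L) (hLc : #Lᶜ ≤ #L) :
    ∑ π : Equiv.Perm α, μ {ω | ∀ i ∈ L, ∀ j ∈ L, i < j → X i j ω = X (π i) (π j) ω} ≤
      ENNReal.ofReal (2 * #Lᶜ ^ #Lᶜ) :=
  calc ∑ π : Equiv.Perm α, μ {ω | ∀ i ∈ L, ∀ j ∈ L, i < j → X i j ω = X (π i) (π j) ω}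
      ≤ ∑ π : Equiv.Perm α, ENNReal.ofReal ((2⁻¹ : ℝ) ^ (#{x ∈ L | π x ≠ x} * (#L / 24))) := by
        refine sum_le_sum fun π _ => (hG.measure_preserves_edges_within_le π L).trans_eq ?_
        rw [ENNReal.ofReal_pow (by norm_num), ENNReal.ofReal_inv_of_pos two_pos,
          ENNReal.ofReal_ofNat]
    _ = ENNReal.ofReal (∑ π : Equiv.Perm α, (2⁻¹ : ℝ) ^ (#{x ∈ L | π x ≠ x} * (#L / 24))) :=
        (ENNReal.ofReal_sum_of_nonneg fun _ _ => by positivity).symm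
    _ ≤ ENNReal.ofReal (2 * #Lᶜ ^ #Lᶜ) := ENNReal.ofReal_le_ofReal <|
        (sum_perm_le_sum_choose L _ fun _ => by positivity).trans
          (sum_choose_mul_factorial_le hL hLc)

end IsUniformRandomGraph

theorem stmt_4 :
    ∃ K₁ K₂ : ℝ, 0 < K₁ ∧ 0 < K₂ ∧
      ∀ (n m : ℕ), 1 ≤ n → 2 * n ≤ 3 * m → m ≤ n →
      ∀ (Ω : Type) (_ : MeasurableSpace Ω) (μ : Measure Ω), IsProbabilityMeasure μ →
      ∀ (X : Fin n → Fin n → Ω → Bool),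
        (∀ i j, Measurable (X i j)) →
        (∀ i j, X i j = X j i) →
        (∀ i j : Fin n, i < j → μ {ω | X i j ω = true} = 1 / 2) →
        iIndepFun
          (fun p : {p : Fin n × Fin n // p.1 < p.2} => X p.1.1 p.1.2) μ →
        ∑ π : Equiv.Perm (Fin n),
            μ {ω | ∀ i j : Fin n, i < j → (j : ℕ) < m → X i j ω = X (π i) (π j) ω}
          ≤ ENNReal.ofReal
              (K₁ * Real.exp (K₂ * ((n : ℝ) - m) * Real.log ((n : ℝ) - m))) := by
  refine ⟨2 * (720 : ℕ).factorial, 1, by positivity, one_pos, ?_⟩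
  intro n m _ h23 hmn Ω _ μ _ X hmeas hX hhalf hind
  have hG : IsUniformRandomGraph X μ :=
    ⟨hmeas, hX, fun i j hij => (hhalf i j hij).trans (one_div 2), hind⟩
  rw [one_mul, ← Nat.cast_sub hmn, ← natCast_pow_self_eq_exp]
  have h_one : (1 : ℝ) ≤ (n - m : ℕ) ^ (n - m) := by
    rw [natCast_pow_self_eq_exp]; exact Real.one_le_exp (by positivity)
  have h720 : (1 : ℝ) ≤ (720 : ℕ).factorial := by exact_mod_cast Nat.factorial_pos 720
  rcases lt_or_ge n 720 with hn | hn
  · have : (n.factorial : ℝ) ≤ (720 : ℕ).factorial := by exact_mod_cast Nat.factorial_le hn.le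
    calc _ ≤ ∑ _π : Equiv.Perm (Fin n), (1 : ℝ≥0∞) := sum_le_sum fun _ _ => prob_le_one
      _ = ENNReal.ofReal n.factorial := by simp [Fintype.card_perm]
      _ ≤ _ := ENNReal.ofReal_le_ofReal (by nlinarith [(Nat.factorial_pos n).le])
  let L : Finset (Fin n) := {x | (x : ℕ) < m}
  have hL : #L = m := by simp [L, Fin.card_filter_val_lt, hmn]
  have hLc : #Lᶜ = n - m := by rw [card_compl, Fintype.card_fin, hL]
  calc _ ≤ ∑ π : Equiv.Perm (Fin n),
        μ {ω | ∀ i ∈ L, ∀ j ∈ L, i < j → X i j ω = X (π i) (π j) ω} :=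
      sum_le_sum fun π _ => measure_mono fun ω (h : ∀ i j : Fin n, i < j → (j : ℕ) < m → _)
        i _ j hj hij => h i j hij (by simpa [L] using hj)
    _ ≤ ENNReal.ofReal (2 * (n - m : ℕ) ^ (n - m)) :=
      hLc ▸ hG.sum_measure_preserves_edges_within_le L (by omega) (by omega)
    _ ≤ _ := ENNReal.ofReal_le_ofReal (by nlinarith)
end
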